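/- For all real numbers v₁, v₂, v₃, w with 0 ≤ v₃ ≤ v₂ ≤ v₁ ≤ 1 and 0 ≤ w ≤ 1, the inequality 2·δ(w, v₁, v₂) ≥ δ(max(v₂, w), v₁, v₃) + δ(max(v₁, w), v₂, v₃) holds. (In words: for the split attack, the truthful-minus-attack utility difference evaluated at a given adversary profile is at least the average over 'flipping' one of the two top one-item adversary bids to a two-item bid, which is the pointwise core of the monotonicity in k of the expected utility difference.) -/

import Mathlib

/-!
For `b ≤ 1` the utility difference has the closed form
`δ(w, a, b) = max (2w - 2) (min (a - b) (2a - 2w))`. Dropping the `min` gives the upper bound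
`max (2w - 2) (2a - 2w)`, which no longer depends on `b`; we use it for both flipped terms and
the exact form for `δ(w, v₁, v₂)`. What remains is linear arithmetic in each of the three
positions of `w` relative to `v₂ ≤ v₁`; when `w ≥ v₁` it is just monotonicity of the bound in `a`.
-/

/-- Truthful minus split-attack utility of a bidder of true type (2,1) submitting the
false-name bids (1,1),(1,1), when the two highest one-item adversary per-item values are
`a ≥ b` and the highest two-item adversary per-item value is `w`. -/
noncomputable def delta (w a b : ℝ) : ℝ :=
  if w ≤ (a + b) / 2 then a - b
  else if w ≤ (1 + a) / 2 then 2 * a - 2 * w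
  else 2 * w - 2

lemma max_add_max_le {α : Type*} [AddCommGroup α] [LinearOrder α] {p q r s c : α}
    (hpr : p + r ≤ c) (hps : p + s ≤ c) (hqr : q + r ≤ c) (hqs : q + s ≤ c) :
    max p q + max r s ≤ c := by
  rcases max_choice p q with h | h <;> rcases max_choice r s with h' | h' <;> rw [h, h'] <;>
    assumption

section Delta

variable {w a b : ℝ}

lemma delta_eq_max_min (hb : b ≤ 1) :
    delta w a b = max (2 * w - 2) (min (a - b) (2 * a - 2 * w)) := by
  unfold delta
  split_ifs with hmid hhigh
  · rw [min_eq_left (by linarith), max_eq_right (by linarith)]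
  · rw [min_eq_right (by linarith), max_eq_right (by linarith)]
  · rw [min_eq_right (by linarith), max_eq_left (by linarith)]

lemma delta_le_max (hb : b ≤ 1) : delta w a b ≤ max (2 * w - 2) (2 * a - 2 * w) :=
  (delta_eq_max_min hb).trans_le (max_le_max le_rfl (min_le_right _ _))

lemma delta_eq_sub_of_le (h : w ≤ (a + b) / 2) : delta w a b = a - b :=
  if_pos h

lemma delta_eq_max_of_le (hb : b ≤ 1) (h : (a + b) / 2 ≤ w) :
    delta w a b = max (2 * w - 2) (2 * a - 2 * w) := by
  rw [delta_eq_max_min hb, min_eq_right (by linarith)]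

end Delta

section Flip

variable {v₁ v₂ v₃ w : ℝ}

lemma delta_flip_le_of_le_second (h32 : v₃ ≤ v₂) (h21 : v₂ ≤ v₁) (h1 : v₁ ≤ 1) (hw2 : w ≤ v₂) :
    delta v₂ v₁ v₃ + delta v₁ v₂ v₃ ≤ 2 * delta w v₁ v₂ := by
  rw [delta_eq_sub_of_le (show w ≤ (v₁ + v₂) / 2 by linarith)]
  refine (add_le_add (delta_le_max (by linarith)) (delta_le_max (by linarith))).trans ?_
  apply max_add_max_le <;> linarith

lemma delta_flip_le_of_le_first (h32 : v₃ ≤ v₂) (h21 : v₂ ≤ v₁) (h1 : v₁ ≤ 1) (hw2 : v₂ ≤ w)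
    (hw1 : w ≤ v₁) :
    delta w v₁ v₃ + delta v₁ v₂ v₃ ≤ 2 * delta w v₁ v₂ := by
  have hlow : min (v₁ - v₂) (2 * v₁ - 2 * w) ≤ delta w v₁ v₂ :=
    (le_max_right _ _).trans_eq (delta_eq_max_min (by linarith)).symm
  refine (add_le_add (delta_le_max (by linarith)) (delta_le_max (by linarith))).trans ?_
  rcases min_choice (v₁ - v₂) (2 * v₁ - 2 * w) with hmin | hmin <;> rw [hmin] at hlow <;>
    apply max_add_max_le <;> linarith

lemma delta_flip_le_of_first_le (h32 : v₃ ≤ v₂) (h21 : v₂ ≤ v₁) (h1 : v₁ ≤ 1) (hw1 : v₁ ≤ w) :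
    delta w v₁ v₃ + delta w v₂ v₃ ≤ 2 * delta w v₁ v₂ := by
  calc delta w v₁ v₃ + delta w v₂ v₃
      ≤ max (2 * w - 2) (2 * v₁ - 2 * w) + max (2 * w - 2) (2 * v₂ - 2 * w) :=
        add_le_add (delta_le_max (by linarith)) (delta_le_max (by linarith))
    _ ≤ 2 * max (2 * w - 2) (2 * v₁ - 2 * w) := by
        have hmono : max (2 * w - 2) (2 * v₂ - 2 * w) ≤ max (2 * w - 2) (2 * v₁ - 2 * w) :=
          max_le_max le_rfl (by linarith)
        linarith
    _ = 2 * delta w v₁ v₂ := by rw [delta_eq_max_of_le (by linarith) (by linarith)]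

end Flip

theorem stmt_11_general (v₁ v₂ v₃ w : ℝ) (h32 : v₃ ≤ v₂) (h21 : v₂ ≤ v₁)
    (h1 : v₁ ≤ 1) :
    2 * delta w v₁ v₂ ≥ delta (max v₂ w) v₁ v₃ + delta (max v₁ w) v₂ v₃ := by
  rcases le_total w v₂ with hw2 | hw2
  · rw [max_eq_left hw2, max_eq_left (hw2.trans h21)]
    exact delta_flip_le_of_le_second h32 h21 h1 hw2
  rcases le_total w v₁ with hw1 | hw1
  · rw [max_eq_right hw2, max_eq_left hw1]
    exact delta_flip_le_of_le_first h32 h21 h1 hw2 hw1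
  · rw [max_eq_right hw2, max_eq_right hw1]
    exact delta_flip_le_of_first_le h32 h21 h1 hw1

theorem stmt_11 (v₁ v₂ v₃ w : ℝ) (h3 : 0 ≤ v₃) (h32 : v₃ ≤ v₂) (h21 : v₂ ≤ v₁)
    (h1 : v₁ ≤ 1) (hw0 : 0 ≤ w) (hw1 : w ≤ 1) :
    2 * delta w v₁ v₂ ≥ delta (max v₂ w) v₁ v₃ + delta (max v₁ w) v₂ v₃ :=
  stmt_11_general v₁ v₂ v₃ w h32 h21 h1
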